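/- For a complex number a with a ≠ 0, let A(a) be the 3×3 matrix with rows (2, -1, -1), (a-1, 0, -a), (a+1, -a, 0) (the Cartan matrix of S(1,2,a), where index 1 is the even simple root and indices 2, 3 are the isotropic odd simple roots). Then the odd reflection of A(a) at index 3 equals the matrix N with rows (0, -a-2, a+1), (-a², 2a², -a²), (a+1, -a, 0); and multiplying rows 1 and 3 of N by -1 and row 2 by 1/a², followed by simultaneously permuting rows and columns by the bijection σ with σ(1) = 2, σ(2) = 3, σ(3) = 1 (i.e. the entry in position (u,v) of the result is d_{σ(u)}·N_{σ(u),σ(v)} with d₁ = d₃ = -1, d₂ = 1/a²), yields exactly the matrix A(a+1). -/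

import Mathlib

open scoped Classical in
/-- The odd reflection `r_k(A)` of a square complex matrix `A` at an index `k`
(with `A k k = 0`). -/
noncomputable def oddReflection {I : Type*} [DecidableEq I]
    (A : Matrix I I ℂ) (k : I) : Matrix I I ℂ :=
  Matrix.of fun i j =>
    if i = k then A k j
    else if j = k then -(A k i * A i k)
    else if A i k = 0 ∧ A k i = 0 then A i j
    else if A j k = 0 ∧ A k j = 0 then A k i * A i j
    else A k i * A i j + A k j * A i k + A k i * A i k

/-- The Cartan matrix of `S(1,2,a)`: the first simple root is even, the second and
third are isotropic odd. -/
def S12 (a : ℂ) : Matrix (Fin 3) (Fin 3) ℂ :=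
  !![2, -1, -1; a - 1, 0, -a; a + 1, -a, 0]

/-! For `a ≠ 0` both other vertices of `S(1,2,a)` are linked to the third one, so off the
third row the odd reflection is given by its generic formula and the computation is entrywise
polynomial arithmetic; `a ≠ 0` is used once more to divide the second row by `a²`. -/

section OddReflection

variable {I : Type*} [DecidableEq I] (A : Matrix I I ℂ) {k : I}

theorem oddReflection_apply_row (j : I) : oddReflection A k k j = A k j := by
  simp [oddReflection]

theorem oddReflection_apply_col {i : I} (hi : i ≠ k) :
    oddReflection A k i k = -(A k i * A i k) := by
  simp [oddReflection, hi]

theorem oddReflection_apply_of_linked {i j : I} (hi : i ≠ k) (hj : j ≠ k)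
    (hik : A i k ≠ 0) (hjk : A j k ≠ 0) :
    oddReflection A k i j = A k i * A i j + A k j * A i k + A k i * A i k := by
  simp [oddReflection, hi, hj, hik, hjk]

end OddReflection

theorem S12_apply_two_ne_zero {a : ℂ} (ha : a ≠ 0) {i : Fin 3} (hi : i ≠ 2) :
    S12 a i 2 ≠ 0 := by
  fin_cases i <;> simp_all [S12]

theorem oddReflection_S12_two {a : ℂ} (ha : a ≠ 0) :
    oddReflection (S12 a) 2 =
      !![0, -a - 2, a + 1; -a ^ 2, 2 * a ^ 2, -a ^ 2; a + 1, -a, 0] := by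
  ext i j
  by_cases hi : i = 2
  · subst hi
    rw [oddReflection_apply_row]
    fin_cases j <;> simp [S12]
  by_cases hj : j = 2
  · subst hj
    rw [oddReflection_apply_col _ hi]
    fin_cases i <;> simp_all [S12, sq]
  rw [oddReflection_apply_of_linked _ hi hj (S12_apply_two_ne_zero ha hi)
    (S12_apply_two_ne_zero ha hj)]
  fin_cases i <;> fin_cases j <;> simp_all [S12] <;> ring

/-- The other half of **Lemma 7.6**: the family `S(1,2,a)` is closed under the regular
odd reflection at the third simple root, which replaces `a` by `a + 1`.  Explicitly,
`r₃(S(1,2,a))` is the displayed matrix `N`, and rescaling the rows of `N` by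
`(-1, 1/a², -1)` and simultaneously permuting rows and columns by `σ = (1 ↦ 2, 2 ↦ 3,
3 ↦ 1)` yields `S(1,2,a+1)`. -/
theorem oddReflection_S12_at_third (a : ℂ) (ha : a ≠ 0) :
    oddReflection (S12 a) 2 =
      !![0, -a - 2, a + 1; -a ^ 2, 2 * a ^ 2, -a ^ 2; a + 1, -a, 0] ∧
    (Matrix.of fun u v : Fin 3 =>
        (![(-1 : ℂ), 1 / a ^ 2, -1] (![1, 2, 0] u)) *
          oddReflection (S12 a) 2 (![1, 2, 0] u) (![1, 2, 0] v))
      = S12 (a + 1) := by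
  rw [oddReflection_S12_two ha]
  refine ⟨rfl, ?_⟩
  ext u v
  fin_cases u <;> fin_cases v <;> simp [S12] <;> grind
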